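/- If A ≤⁻ B in the minus order, then A ≤⁺ B in the plus order; i.e., if A = Q̃B = BQ for bounded idempotents Q̃, Q, then range(A) ⊆ range(B), range(A*) ⊆ range(B*), and A = Q̃' B Q' for some bounded idempotents Q̃', Q'. -/

import Mathlib

open ContinuousLinearMap

theorem ContinuousLinearMap.eq_comp_comp_of_eq_comp_of_eq_comp {R M N : Type*} [Semiring R]
    [TopologicalSpace M] [AddCommMonoid M] [Module R M]
    [TopologicalSpace N] [AddCommMonoid N] [Module R N]
    {A B : M →L[R] N} {P : N →L[R] N} {Q : M →L[R] M}
    (hP : P ∘L P = P) (hAP : A = P ∘L B) (hAQ : A = B ∘L Q) :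
    A = P ∘L (B ∘L Q) := by
  calc A = P ∘L (P ∘L B) := by rw [← comp_assoc, hP, hAP]
    _ = P ∘L (B ∘L Q) := by rw [← hAP, ← hAQ]

theorem stmt5 {H K : Type*} [NormedAddCommGroup H] [InnerProductSpace ℂ H] [CompleteSpace H]
    [NormedAddCommGroup K] [InnerProductSpace ℂ K] [CompleteSpace K]
    (A B : H →L[ℂ] K)
    (h : ∃ (Qt : K →L[ℂ] K) (Q : H →L[ℂ] H),
      Qt ∘L Qt = Qt ∧ Q ∘L Q = Q ∧ A = Qt ∘L B ∧ A = B ∘L Q) :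
    LinearMap.range (A : H →ₗ[ℂ] K) ≤ LinearMap.range (B : H →ₗ[ℂ] K) ∧
    LinearMap.range (adjoint A : K →ₗ[ℂ] H) ≤ LinearMap.range (adjoint B : K →ₗ[ℂ] H) ∧
    ∃ (Qt' : K →L[ℂ] K) (Q' : H →L[ℂ] H),
      Qt' ∘L Qt' = Qt' ∧ Q' ∘L Q' = Q' ∧ A = Qt' ∘L (B ∘L Q') := by
  obtain ⟨Qt, Q, hQt, hQ, hAQt, hAQ⟩ := h
  refine ⟨?_, ?_, Qt, Q, hQt, hQ, eq_comp_comp_of_eq_comp_of_eq_comp hQt hAQt hAQ⟩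
  · rw [hAQ]
    exact LinearMap.range_comp_le_range (Q : H →ₗ[ℂ] H) (B : H →ₗ[ℂ] K)
  · rw [hAQt, adjoint_comp]
    exact LinearMap.range_comp_le_range (adjoint Qt : K →ₗ[ℂ] K) (adjoint B : K →ₗ[ℂ] H)
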